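/- arXiv:2004.00172 — 6 statements merged into one kernel-verified Lean document; each statement's English description precedes it below -/
import Mathlib

section
/- If H is an induced subgraph of a graph G, then for every k, the ideal of Z[t] generated by the k×k minors of t·I - A(H) is contained in the ideal generated by the k×k minors of t·I - A(G), where A denotes the adjacency matrix. -/
open Polynomial

/-- The set of `k × k` minors of a matrix. -/
def minorsSet {V W R : Type*} [CommRing R] (M : Matrix V W R) (k : ℕ) : Set R :=
  { d | ∃ (f : Fin k ↪ V) (g : Fin k ↪ W), d = (M.submatrix f g).det }

/-- The characteristic matrix `t·I − A(G)` of a graph. -/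
noncomputable def charMatrix {V : Type*} [Fintype V] [DecidableEq V]
    (G : SimpleGraph V) [DecidableRel G.Adj] : Matrix V V (Polynomial ℤ) :=
  (X : Polynomial ℤ) • (1 : Matrix V V (Polynomial ℤ)) - (G.adjMatrix ℤ).map C

theorem charIdeal_mono_of_induced {V W : Type*} [Fintype V] [DecidableEq V]
    [Fintype W] [DecidableEq W]
    (G : SimpleGraph V) [DecidableRel G.Adj] (H : SimpleGraph W) [DecidableRel H.Adj]
    (f : W ↪ V) (hf : ∀ a b, H.Adj a b ↔ G.Adj (f a) (f b)) (k : ℕ) :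
    Ideal.span (minorsSet (charMatrix H) k) ≤ Ideal.span (minorsSet (charMatrix G) k) := by
  apply Ideal.span_mono
  rintro d ⟨g, h, rfl⟩
  refine ⟨g.trans f, h.trans f, ?_⟩
  congr 1
  ext i j
  simp only [charMatrix, Matrix.submatrix_apply, Function.Embedding.trans_apply,
    Matrix.sub_apply, Matrix.smul_apply, Matrix.one_apply, Matrix.map_apply,
    SimpleGraph.adjMatrix_apply, f.injective.eq_iff, hf]
end

section
/- If H is an induced subgraph of G, then the number of invariant factors equal to 1 in the Smith normal form of A(H) is at most the number of invariant factors equal to 1 in the Smith normal form of A(G). -/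
/-- `phi M` is the number of invariant factors of `M` equal to `1`, i.e. the largest `k`
such that the gcd of all `k × k` minors of `M` is `1` (equivalently, the span of the
`k`-minors is the unit ideal). -/
noncomputable def phi {V W : Type*} (M : Matrix V W ℤ) : ℕ :=
  sSup {k : ℕ | Ideal.span (minorsSet M k) = ⊤}

lemma zero_mem_phiSet {V W : Type*} (M : Matrix V W ℤ) :
    (0 : ℕ) ∈ {k : ℕ | Ideal.span (minorsSet M k) = ⊤} := by
  have h1 : (1 : ℤ) ∈ minorsSet M 0 := by
    refine ⟨Function.Embedding.ofIsEmpty, Function.Embedding.ofIsEmpty, ?_⟩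
    simp [Matrix.det_isEmpty]
  rw [Set.mem_setOf_eq, Ideal.eq_top_iff_one]
  exact Ideal.subset_span h1

lemma bddAbove_phiSet {V W : Type*} [Fintype V] (M : Matrix V W ℤ) :
    BddAbove {k : ℕ | Ideal.span (minorsSet M k) = ⊤} := by
  refine ⟨Fintype.card V, fun k hk => ?_⟩
  by_contra h
  push_neg at h
  have hempty : minorsSet M k = ∅ := by
    ext d
    simp only [minorsSet, Set.mem_setOf_eq, Set.mem_empty_iff_false, iff_false]
    rintro ⟨g, _, _⟩
    have := Fintype.card_le_of_embedding g
    simp at this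
    omega
  rw [Set.mem_setOf_eq, hempty] at hk
  simp [Ideal.span_empty] at hk

theorem phi_mono_of_induced {V W : Type*} [Fintype V] [DecidableEq V]
    [Fintype W] [DecidableEq W]
    (G : SimpleGraph V) [DecidableRel G.Adj] (H : SimpleGraph W) [DecidableRel H.Adj]
    (f : W ↪ V) (hf : ∀ a b, H.Adj a b ↔ G.Adj (f a) (f b)) :
    phi (H.adjMatrix ℤ) ≤ phi (G.adjMatrix ℤ) := by
  have hM : H.adjMatrix ℤ = (G.adjMatrix ℤ).submatrix f f := by
    ext a b
    simp [Matrix.submatrix_apply, SimpleGraph.adjMatrix, hf a b]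
  apply csSup_le_csSup (bddAbove_phiSet _) ⟨0, zero_mem_phiSet _⟩
  intro k hk
  rw [Set.mem_setOf_eq] at hk ⊢
  have hsub : minorsSet (H.adjMatrix ℤ) k ⊆ minorsSet (G.adjMatrix ℤ) k := by
    rintro d ⟨g, h, rfl⟩
    refine ⟨g.trans f, h.trans f, ?_⟩
    rw [hM]
    rfl
  have := Ideal.span_mono hsub
  rw [hk] at this
  exact top_le_iff.mp this
end

section
/- The fourth characteristic ideal of the triangular prism K_3 □ K_2 equals the ideal ⟨t + 2, 5⟩ of Z[t], and its third characteristic ideal is trivial. -/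
open Polynomial

/-- The adjacency matrix of the triangular prism `K₃ □ K₂`: triangles on
vertices 0,1,2 and 3,4,5, with vertex `i` joined to vertex `i+3`. -/
def prismA : Matrix (Fin 6) (Fin 6) ℤ :=
  !![0, 1, 1, 1, 0, 0;
     1, 0, 1, 0, 1, 0;
     1, 1, 0, 0, 0, 1;
     1, 0, 0, 0, 1, 1;
     0, 1, 0, 1, 0, 1;
     0, 0, 1, 1, 1, 0]

/-- The characteristic matrix `t·I₆ − A(K₃ □ K₂)`. -/
noncomputable def prismChar : Matrix (Fin 6) (Fin 6) (Polynomial ℤ) :=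
  (X : Polynomial ℤ) • (1 : Matrix (Fin 6) (Fin 6) (Polynomial ℤ)) - prismA.map C

/- ### Auxiliary lemmas -/

private lemma sa_0_0 : ((0:Fin 4).succAbove (0:Fin 3)) = 1 := rfl
private lemma sa_0_1 : ((0:Fin 4).succAbove (1:Fin 3)) = 2 := rfl
private lemma sa_0_2 : ((0:Fin 4).succAbove (2:Fin 3)) = 3 := rfl
private lemma sa_1_0 : ((1:Fin 4).succAbove (0:Fin 3)) = 0 := rfl
private lemma sa_1_1 : ((1:Fin 4).succAbove (1:Fin 3)) = 2 := rfl
private lemma sa_1_2 : ((1:Fin 4).succAbove (2:Fin 3)) = 3 := rfl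
private lemma sa_2_0 : ((2:Fin 4).succAbove (0:Fin 3)) = 0 := rfl
private lemma sa_2_1 : ((2:Fin 4).succAbove (1:Fin 3)) = 1 := rfl
private lemma sa_2_2 : ((2:Fin 4).succAbove (2:Fin 3)) = 3 := rfl
private lemma sa_3_0 : ((3:Fin 4).succAbove (0:Fin 3)) = 0 := rfl
private lemma sa_3_1 : ((3:Fin 4).succAbove (1:Fin 3)) = 1 := rfl
private lemma sa_3_2 : ((3:Fin 4).succAbove (2:Fin 3)) = 2 := rfl

/-- A product of a `4 × 3` and a `3 × 4` matrix has zero determinant. -/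
private lemma det_mul_43 {K : Type*} [CommRing K] (B : Matrix (Fin 4) (Fin 3) K)
    (C : Matrix (Fin 3) (Fin 4) K) : (B * C).det = 0 := by
  let e : Fin 3 ⊕ Fin 1 ≃ Fin 4 := finSumFinEquiv
  have h : B * C = (Matrix.fromCols B (0 : Matrix (Fin 4) (Fin 1) K)).submatrix id e.symm *
      (Matrix.fromRows C (0 : Matrix (Fin 1) (Fin 4) K)).submatrix e.symm id := by
    rw [Matrix.submatrix_mul_equiv, Matrix.fromCols_mul_fromRows]
    simp
  rw [h, Matrix.det_mul]
  have h0 : ((Matrix.fromCols B (0 : Matrix (Fin 4) (Fin 1) K)).submatrix id e.symm).det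
      = 0 := by
    apply Matrix.det_eq_zero_of_column_eq_zero 3
    intro i
    have he : e.symm (3 : Fin 4) = Sum.inr (0 : Fin 1) := by decide
    simp [Matrix.submatrix_apply, he]
  rw [h0, zero_mul]

/-- Evaluation at `X = -2` followed by reduction modulo `5`. -/
noncomputable def phi5 : Polynomial ℤ →+* ZMod 5 :=
  eval₂RingHom (Int.castRingHom (ZMod 5)) (-2)

private def Bm : Matrix (Fin 6) (Fin 3) (ZMod 5) := !![3,4,4;4,3,4;4,4,3;4,0,0;0,4,0;0,0,4]
private def Cm : Matrix (Fin 3) (Fin 6) (ZMod 5) := !![1,0,0,2,1,1;0,1,0,1,2,1;0,0,1,1,1,2]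

private lemma prismChar_map_phi5 : prismChar.map phi5 = Bm * Cm := by
  have key : (-2 : ZMod 5) • (1 : Matrix (Fin 6) (Fin 6) (ZMod 5))
      - prismA.map (fun a => (a : ZMod 5)) = Bm * Cm := by decide
  rw [← key]
  ext i j
  simp [prismChar, Matrix.map_apply, Matrix.sub_apply, Matrix.smul_apply, Matrix.one_apply,
    phi5, apply_ite, mul_ite]
  rw [← Polynomial.C_eq_intCast, Polynomial.eval₂_C]
  rfl

/-- A uniform description of square submatrices of `prismChar`. -/
private lemma prismChar_submatrix {k : ℕ} (f g : Fin k → Fin 6)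
    (E A' : Matrix (Fin k) (Fin k) ℤ)
    (hE : (1 : Matrix (Fin 6) (Fin 6) ℤ).submatrix f g = E)
    (hA : prismA.submatrix f g = A') :
    prismChar.submatrix f g = (X : ℤ[X]) • (E.map C) - (A'.map C) := by
  rw [← hE, ← hA, ← Matrix.ext_iff]
  intro i j
  simp [prismChar, Matrix.submatrix_apply, Matrix.map_apply, Matrix.smul_apply,
    Matrix.sub_apply, Matrix.one_apply, apply_ite]

private def fa : Fin 4 ↪ Fin 6 := ⟨![0,1,3,5], by decide⟩
private def ga : Fin 4 ↪ Fin 6 := ⟨![0,2,3,4], by decide⟩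
private def fb : Fin 4 ↪ Fin 6 := ⟨![0,1,2,3], by decide⟩
private def gb : Fin 4 ↪ Fin 6 := ⟨![0,1,3,4], by decide⟩
private def f3 : Fin 3 ↪ Fin 6 := ⟨![0,1,2], by decide⟩
private def g3 : Fin 3 ↪ Fin 6 := ⟨![3,4,5], by decide⟩

private lemma det_ma : (prismChar.submatrix fa ga).det = 2 * X - 1 := by
  rw [prismChar_submatrix fa ga
      !![1,0,0,0;0,0,0,0;0,0,1,0;0,0,0,0]
      !![0,1,1,0;1,1,0,1;1,0,0,1;0,1,1,1]
      (by decide) (by decide),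
    Matrix.det_succ_row_zero]
  simp [Fin.sum_univ_succ, Matrix.det_fin_three, Matrix.submatrix_apply,
    sa_0_0, sa_0_1, sa_0_2, sa_1_0, sa_1_1, sa_1_2, sa_2_0, sa_2_1, sa_2_2,
    sa_3_0, sa_3_1, sa_3_2, Matrix.smul_apply, Matrix.sub_apply, Matrix.map_apply]
  ring

private lemma det_mb : (prismChar.submatrix fb gb).det = X ^ 2 + 2 * X := by
  rw [prismChar_submatrix fb gb
      !![1,0,0,0;0,1,0,0;0,0,0,0;0,0,1,0]
      !![0,1,1,0;1,0,0,1;1,1,0,0;1,0,0,1]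
      (by decide) (by decide),
    Matrix.det_succ_row_zero]
  simp [Fin.sum_univ_succ, Matrix.det_fin_three, Matrix.submatrix_apply,
    sa_0_0, sa_0_1, sa_0_2, sa_1_0, sa_1_1, sa_1_2, sa_2_0, sa_2_1, sa_2_2,
    sa_3_0, sa_3_1, sa_3_2, Matrix.smul_apply, Matrix.sub_apply, Matrix.map_apply]
  ring

private lemma det_m3 : (prismChar.submatrix f3 g3).det = -1 := by
  rw [prismChar_submatrix f3 g3 0 1 (by decide) (by decide)]
  rw [Matrix.det_fin_three]
  simp [Matrix.smul_apply, Matrix.sub_apply, Matrix.map_apply, Matrix.one_apply, apply_ite]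

theorem charIdeals_prism :
    Ideal.span (minorsSet prismChar 4) = Ideal.span {(X : Polynomial ℤ) + 2, 5} ∧
    Ideal.span (minorsSet prismChar 3) = (⊤ : Ideal (Polynomial ℤ)) := by
  constructor
  · apply le_antisymm
    · -- every 4×4 minor lies in ⟨X+2, 5⟩
      rw [Ideal.span_le]
      rintro d ⟨f, g, rfl⟩
      set d := (prismChar.submatrix f g).det with hd
      -- the image of the minor under phi5 vanishes
      have hphi : phi5 d = 0 := by
        have h1 : phi5 d = ((prismChar.submatrix f g).map phi5).det := by
          rw [hd, RingHom.map_det]; rfl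
        rw [h1, ← Matrix.submatrix_map, prismChar_map_phi5]
        have h2 : (Bm * Cm).submatrix f g =
            (Bm.submatrix f (_root_.id)) * (Cm.submatrix (_root_.id) g) := by
          have := Matrix.submatrix_mul_equiv Bm Cm (⇑f) (Equiv.refl (Fin 3)) (⇑g)
          simpa using this.symm
        rw [h2]
        exact det_mul_43 _ _
      -- hence 5 divides the value of the minor at -2
      have heval : phi5 d = ((d.eval (-2) : ℤ) : ZMod 5) := by
        have : ((Int.castRingHom (ZMod 5)) (-2 : ℤ)) = (-2 : ZMod 5) := by
          simp
        rw [phi5, coe_eval₂RingHom, ← this, Polynomial.eval₂_at_apply]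
        rfl
      have hdvd : (5 : ℤ) ∣ d.eval (-2) := by
        have := heval ▸ hphi
        exact_mod_cast (ZMod.intCast_zmod_eq_zero_iff_dvd (d.eval (-2)) 5).mp this
      obtain ⟨c, hc⟩ := hdvd
      obtain ⟨q, hq⟩ := Polynomial.X_sub_C_dvd_sub_C_eval (a := (-2 : ℤ)) (p := d)
      have hdq : d = (X - C (-2)) * q + C (d.eval (-2)) := by
        rw [← hq]; ring
      have hX2 : (X : ℤ[X]) - C (-2) = X + 2 := by
        simp [map_neg]
      have hmemX : (X : ℤ[X]) + 2 ∈ Ideal.span {(X : Polynomial ℤ) + 2, 5} :=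
        Ideal.subset_span (by left; rfl)
      have hmem5 : (5 : ℤ[X]) ∈ Ideal.span {(X : Polynomial ℤ) + 2, 5} :=
        Ideal.subset_span (by right; rfl)
      rw [hdq, hX2, hc]
      have hC : (C (5 * c) : ℤ[X]) = 5 * C c := by
        rw [map_mul]; norm_num
      rw [hC]
      exact Ideal.add_mem _ (Ideal.mul_mem_right _ _ hmemX) (Ideal.mul_mem_right _ _ hmem5)
    · -- ⟨X+2, 5⟩ is contained in the span of the 4×4 minors
      rw [Ideal.span_le]
      have hma : (2 * X - 1 : ℤ[X]) ∈ Ideal.span (minorsSet prismChar 4) :=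
        Ideal.subset_span ⟨fa, ga, det_ma.symm⟩
      have hmb : (X ^ 2 + 2 * X : ℤ[X]) ∈ Ideal.span (minorsSet prismChar 4) :=
        Ideal.subset_span ⟨fb, gb, det_mb.symm⟩
      rintro p hp
      rcases hp with hp | hp
      · -- p = X + 2
        have key : (X : ℤ[X]) + 2 =
            (-(X + 2)) * (2 * X - 1) + 2 * (X ^ 2 + 2 * X) := by ring
        rw [hp, key]
        exact Ideal.add_mem _ (Ideal.mul_mem_left _ _ hma) (Ideal.mul_mem_left _ _ hmb)
      · -- p = 5
        have hp5 : p = (5 : ℤ[X]) := hp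
        have key : (5 : ℤ[X]) =
            (-6 - (2 * X - 1)) * (2 * X - 1) + 4 * (X ^ 2 + 2 * X) := by ring
        rw [hp5, key]
        exact Ideal.add_mem _ (Ideal.mul_mem_left _ _ hma) (Ideal.mul_mem_left _ _ hmb)
  · -- the 3×3 minors span the unit ideal
    rw [Ideal.eq_top_iff_one]
    have hm : (-1 : ℤ[X]) ∈ Ideal.span (minorsSet prismChar 3) :=
      Ideal.subset_span ⟨f3, g3, det_m3.symm⟩
    have : (1 : ℤ[X]) = -(-1) := by ring
    rw [this]
    exact neg_mem hm
end

section
/- Let G be a connected simple graph that is paw-free and K_3-free and P_4-free. Then G is a complete bipartite graph. -/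
/-- The paw graph: a triangle on vertices 1,2,3 with a pendant vertex 0 adjacent to 1. -/
def pawGraph : SimpleGraph (Fin 4) :=
  SimpleGraph.fromRel (fun i j =>
    (i = 0 ∧ j = 1) ∨ (i = 1 ∧ j = 2) ∨ (i = 2 ∧ j = 3) ∨ (i = 1 ∧ j = 3))

/-!
Fix a vertex `v`. Since `G` has no induced `P₄`, a shortest path has at most two edges, so every
vertex other than `v` is adjacent to `v` or to one of its neighbours. A non-neighbour `b` of `v`
with `b - a - v` is then adjacent to every neighbour `a'` of `v`: otherwise `b - a - v - a'` is an
induced `P₄`, because `a` and `a'` are non-adjacent in a triangle-free graph. Triangle-freeness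
makes both the neighbourhood of `v` and its complement independent, so `G` is the complete
bipartite graph between them.
-/

namespace SimpleGraph

variable {V : Type*} {G : SimpleGraph V}

lemma pathGraph_four_isIndContained {a b c d : V} (hab : G.Adj a b) (hbc : G.Adj b c)
    (hcd : G.Adj c d) (hac : ¬G.Adj a c) (had : ¬G.Adj a d) (hbd : ¬G.Adj b d) :
    pathGraph 4 ⊴ G := by
  have hac' : a ≠ c := by rintro rfl; exact had hcd
  have had' : a ≠ d := by rintro rfl; exact hac hcd.symm
  have hbd' : b ≠ d := by rintro rfl; exact had hab
  have hca : ¬G.Adj c a := mt Adj.symm hac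
  have hda : ¬G.Adj d a := mt Adj.symm had
  have hdb : ¬G.Adj d b := mt Adj.symm hbd
  refine ⟨⟨⟨![a, b, c, d], ?_⟩, ?_⟩⟩
  · intro i j hij
    fin_cases i <;> fin_cases j <;> simp_all [hab.ne, hbc.ne, hcd.ne, hab.ne.symm, hbc.ne.symm,
      hcd.ne.symm, hac'.symm, had'.symm, hbd'.symm]
  · intro i j
    change G.Adj (![a, b, c, d] i) (![a, b, c, d] j) ↔ _
    fin_cases i <;> fin_cases j <;> simp [pathGraph_adj, hab, hbc, hcd, hac, had, hbd,
      hab.symm, hbc.symm, hcd.symm, hca, hda, hdb]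

lemma Reachable.eq_or_adj_or_exists_adj_adj (hP4 : ¬pathGraph 4 ⊴ G) {u w : V}
    (h : G.Reachable u w) : u = w ∨ G.Adj u w ∨ ∃ a, G.Adj u a ∧ G.Adj a w := by
  obtain ⟨p⟩ := h
  induction p with
  | nil => exact .inl rfl
  | @cons u x w hux p ih =>
    by_cases huw : G.Adj u w
    · exact .inr (.inl huw)
    refine .inr (.inr ?_)
    rcases ih with rfl | hxw | ⟨a, hxa, haw⟩
    · exact absurd hux huw
    · exact ⟨x, hux, hxw⟩
    by_cases hxw : G.Adj x w
    · exact ⟨x, hux, hxw⟩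
    by_cases hua : G.Adj u a
    · exact ⟨a, hua, haw⟩
    exact (hP4 (pathGraph_four_isIndContained hux hxa haw hua huw hxw)).elim

lemma nonempty_iso_completeBipartiteGraph_of_adj_iff_xor (p : V → Prop) [DecidablePred p]
    (h : ∀ x y, G.Adj x y ↔ Xor (p x) (p y)) :
    Nonempty (G ≃g completeBipartiteGraph {x // p x} {x // ¬p x}) := by
  refine ⟨RelIso.symm ⟨Equiv.sumCompl p, ?_⟩⟩
  rintro (⟨x, hx⟩ | ⟨x, hx⟩) (⟨y, hy⟩ | ⟨y, hy⟩) <;> simp [h, xor_def, hx, hy]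

section TriangleFree

variable (hconn : G.Connected) (hK3 : G.CliqueFree 3) (hP4 : ¬pathGraph 4 ⊴ G)
include hconn hK3 hP4

lemma Connected.adj_of_not_adj_of_adj {v a b : V} (hvb : ¬G.Adj v b) (hva : G.Adj v a) :
    G.Adj b a := by
  rcases (hconn.preconnected b v).eq_or_adj_or_exists_adj_adj hP4
    with rfl | hbv | ⟨a₀, hba₀, ha₀v⟩
  · exact hva
  · exact absurd hbv.symm hvb
  by_contra hba
  have ha₀a : ¬G.Adj a₀ a := fun h =>
    G.isIndepSet_neighborSet_of_triangleFree hK3 v ha₀v.symm hva h.ne h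
  exact hP4 (pathGraph_four_isIndContained hba₀ ha₀v hva (mt Adj.symm hvb) hba ha₀a)

lemma Connected.adj_iff_xor_adj (v x y : V) : G.Adj x y ↔ Xor (G.Adj v x) (G.Adj v y) := by
  have hnbr : ∀ {a b}, ¬G.Adj v b → G.Adj v a → G.Adj b a :=
    hconn.adj_of_not_adj_of_adj hK3 hP4
  refine ⟨fun hxy => ?_, ?_⟩
  · by_cases hvx : G.Adj v x <;> by_cases hvy : G.Adj v y
    · exact (G.isIndepSet_neighborSet_of_triangleFree hK3 v hvx hvy hxy.ne hxy).elim
    · exact .inl ⟨hvx, hvy⟩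
    · exact .inr ⟨hvy, hvx⟩
    obtain ⟨a, hva⟩ : ∃ a, G.Adj v a := by
      rcases (hconn.preconnected v x).eq_or_adj_or_exists_adj_adj hP4
        with rfl | hvx' | ⟨a, hva, -⟩
      exacts [⟨y, hxy⟩, absurd hvx' hvx, ⟨a, hva⟩]
    exact (G.isIndepSet_neighborSet_of_triangleFree hK3 a
      (hnbr hvx hva).symm (hnbr hvy hva).symm hxy.ne hxy).elim
  · rintro (⟨hvx, hvy⟩ | ⟨hvy, hvx⟩)
    exacts [(hnbr hvy hvx).symm, hnbr hvx hvy]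

end TriangleFree

end SimpleGraph

theorem completeBipartite_of_paw_free_K3_free_P4_free_general {V : Type*} [Fintype V]
    (G : SimpleGraph V) (hconn : G.Connected)
    (hK3 : ¬ Nonempty ((⊤ : SimpleGraph (Fin 3)) ↪g G))
    (hP4 : ¬ Nonempty (SimpleGraph.pathGraph 4 ↪g G)) :
    ∃ m n : ℕ, Nonempty (G ≃g completeBipartiteGraph (Fin m) (Fin n)) := by
  classical
  obtain ⟨v⟩ := hconn.nonempty
  have hK3 : G.CliqueFree 3 := (G.not_cliqueFree_iff_top_isContained 3).symm.not_left.mp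
    (mt SimpleGraph.top_isIndContained_iff_top_isContained.mpr hK3)
  obtain ⟨e⟩ := SimpleGraph.nonempty_iso_completeBipartiteGraph_of_adj_iff_xor (G.Adj v)
    (hconn.adj_iff_xor_adj hK3 hP4 v)
  exact ⟨_, _, ⟨e.trans (SimpleGraph.completeBipartiteGraphCongr
    (Fintype.equivFin _) (Fintype.equivFin _))⟩⟩

theorem completeBipartite_of_paw_free_K3_free_P4_free {V : Type*} [Fintype V]
    (G : SimpleGraph V) (hconn : G.Connected)
    (hpaw : ¬ Nonempty (pawGraph ↪g G))
    (hK3 : ¬ Nonempty ((⊤ : SimpleGraph (Fin 3)) ↪g G))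
    (hP4 : ¬ Nonempty (SimpleGraph.pathGraph 4 ↪g G)) :
    ∃ m n : ℕ, Nonempty (G ≃g completeBipartiteGraph (Fin m) (Fin n)) :=
  completeBipartite_of_paw_free_K3_free_P4_free_general G hconn hK3 hP4
end

section
/- Let G be a complete k-partite graph with n vertices (each of the k parts nonempty). Then the Smith normal form of the adjacency matrix A(G) is the diagonal matrix with k−1 ones, followed by the entry k−1, followed by n−k zeros. -/
/-!
Rows and columns of the adjacency matrix indexed by vertices of the same part coincide.
Subtracting from every vertex's row and column those of a fixed representative of its part is a
unimodular change, and it leaves the adjacency matrix `J - I` of `K_k` on the representatives,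
padded by zeros. Once the representatives are permuted to the first `k` indices, with `ℓ = k - 1`
the last one: replacing row `ℓ` by the sum of the first `k` rows makes it `(ℓ, …, ℓ)`;
subtracting column `ℓ` from the earlier columns leaves `-I` with a column of ones above the
pivot `ℓ`; adding the earlier columns to column `ℓ` clears that column, and negating the
first `ℓ` rows gives `diag(1, …, 1, k - 1, 0, …, 0)`.
-/

open Matrix Finset

namespace Matrix

section Equivalence

variable {m n R : Type*} [Fintype m] [Fintype n] [DecidableEq m] [DecidableEq n] [CommRing R]

def IsEquivalent (A B : Matrix m n R) : Prop :=
  ∃ (P : Matrix m m R) (Q : Matrix n n R), IsUnit P.det ∧ IsUnit Q.det ∧ P * A * Q = B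

theorem IsEquivalent.trans {A B C : Matrix m n R} (hAB : IsEquivalent A B)
    (hBC : IsEquivalent B C) : IsEquivalent A C := by
  obtain ⟨P, Q, hP, hQ, rfl⟩ := hAB
  obtain ⟨P', Q', hP', hQ', rfl⟩ := hBC
  refine ⟨P' * P, Q * Q', ?_, ?_, ?_⟩
  · rw [det_mul]; exact hP'.mul hP
  · rw [det_mul]; exact hQ.mul hQ'
  · simp only [Matrix.mul_assoc]

theorem isEquivalent_submatrix (A : Matrix m n R) (e : Equiv.Perm m) (f : Equiv.Perm n) :
    IsEquivalent A (A.submatrix e f) := by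
  refine ⟨e.permMatrix R, Equiv.Perm.permMatrix R f⁻¹, ?_, ?_, ?_⟩
  · simpa using (Equiv.Perm.sign e).isUnit.map (Int.castRingHom R)
  · simpa using (Equiv.Perm.sign f⁻¹).isUnit.map (Int.castRingHom R)
  · rw [PEquiv.toMatrix_toPEquiv_mul, PEquiv.mul_toMatrix_toPEquiv]; rfl

theorem isUnit_det_one_sub_of_mul_self_eq_zero {N : Matrix m m R} (hN : N * N = 0) :
    IsUnit (1 - N).det :=
  (isUnit_iff_isUnit_det _).mp <| IsNilpotent.isUnit_one_sub ⟨2, by rw [sq, hN]⟩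

theorem isUnit_det_one_add_of_mul_self_eq_zero {N : Matrix m m R} (hN : N * N = 0) :
    IsUnit (1 + N).det :=
  (isUnit_iff_isUnit_det _).mp <| IsNilpotent.isUnit_one_add ⟨2, by rw [sq, hN]⟩

end Equivalence

section Fibres

variable {ι κ R : Type*} [Fintype ι] [DecidableEq ι] [CommRing R] (p : ι → κ) (s : κ → ι)

/-- `1 - toRepresentative p s` subtracts from each column `v` the column of the representative
`s (p v)` of its fibre. -/
def toRepresentative : Matrix ι ι R :=
  of fun u v => if s (p v) ≠ v ∧ u = s (p v) then 1 else 0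

variable {p s}

theorem toRepresentative_mul_self (hs : ∀ i, p (s i) = i) :
    toRepresentative p s * toRepresentative p s = (0 : Matrix ι ι R) := by
  ext u v
  simp only [mul_apply, toRepresentative, of_apply, Matrix.zero_apply]
  refine sum_eq_zero fun w _ => ?_
  split_ifs <;> simp_all

theorem mul_one_sub_toRepresentative {l : Type*} (M : Matrix l ι R)
    (hM : ∀ u v, M u (s (p v)) = M u v) :
    M * (1 - toRepresentative p s : Matrix ι ι R) =
      of fun u v => if s (p v) = v then M u v else 0 := by
  rw [Matrix.mul_sub, Matrix.mul_one]
  ext u v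
  by_cases hv : s (p v) = v
  · simp [mul_apply, toRepresentative, hv]
  · simp [mul_apply, toRepresentative, hv, hM]

theorem one_sub_toRepresentative_transpose_mul {l : Type*} (M : Matrix ι l R)
    (hM : ∀ u v, M (s (p u)) v = M u v) :
    (1 - toRepresentative p s : Matrix ι ι R)ᵀ * M =
      of fun u v => if s (p u) = u then M u v else 0 := by
  rw [← transpose_transpose M, ← transpose_mul, mul_one_sub_toRepresentative _ fun u v => hM v u]
  rfl

theorem isEquivalent_restrict_representatives (f : κ → κ → R) (hs : ∀ i, p (s i) = i) :
    IsEquivalent (of fun u v => f (p u) (p v))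
      (of fun u v => if s (p u) = u ∧ s (p v) = v then f (p u) (p v) else 0) := by
  have hunit := isUnit_det_one_sub_of_mul_self_eq_zero (toRepresentative_mul_self (R := R) hs)
  refine ⟨(1 - toRepresentative p s)ᵀ, 1 - toRepresentative p s, ?_, hunit, ?_⟩
  · rwa [det_transpose]
  · rw [Matrix.mul_assoc, mul_one_sub_toRepresentative _ (by simp [hs]),
      one_sub_toRepresentative_transpose_mul _ (by simp [hs])]
    ext u v
    simp only [of_apply]
    split_ifs <;> tauto

end Fibres

end Matrix

section SmithForm

variable {n : ℕ}

def paddedCompleteAdj (ℓ : Fin n) : Matrix (Fin n) (Fin n) ℤ :=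
  of fun u v => if u ≤ ℓ ∧ v ≤ ℓ ∧ u ≠ v then 1 else 0

def rowOnesBefore (ℓ : Fin n) : Matrix (Fin n) (Fin n) ℤ :=
  of fun a b => if a = ℓ ∧ b < ℓ then 1 else 0

theorem rowOnesBefore_mul_self (ℓ : Fin n) : rowOnesBefore ℓ * rowOnesBefore ℓ = 0 := by
  ext a b
  simp only [mul_apply, rowOnesBefore, of_apply, Matrix.zero_apply]
  refine sum_eq_zero fun w _ => ?_
  split_ifs <;> simp_all

theorem one_add_rowOnesBefore_mul_apply (ℓ : Fin n) (M : Matrix (Fin n) (Fin n) ℤ) (a v : Fin n) :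
    ((1 + rowOnesBefore ℓ) * M) a v = if a = ℓ then ∑ u ∈ Iic ℓ, M u v else M a v := by
  rw [Matrix.add_mul, Matrix.one_mul, Matrix.add_apply, mul_apply]
  split_ifs with ha
  · simp [rowOnesBefore, ha, ← Iio_insert, ← filter_gt_eq_Iio, sum_filter]
  · simp [rowOnesBefore, ha]

theorem mul_one_sub_rowOnesBefore_apply (ℓ : Fin n) (M : Matrix (Fin n) (Fin n) ℤ) (u v : Fin n) :
    (M * (1 - rowOnesBefore ℓ)) u v = if v < ℓ then M u v - M u ℓ else M u v := by
  rw [Matrix.mul_sub, Matrix.mul_one, Matrix.sub_apply, mul_apply]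
  split_ifs with hv <;> simp [rowOnesBefore, hv]

theorem mul_one_add_rowOnesBefore_transpose_apply (ℓ : Fin n) (M : Matrix (Fin n) (Fin n) ℤ)
    (u v : Fin n) :
    (M * (1 + (rowOnesBefore ℓ)ᵀ)) u v =
      if v = ℓ then M u ℓ + ∑ w ∈ Iio ℓ, M u w else M u v := by
  rw [Matrix.mul_add, Matrix.mul_one, Matrix.add_apply, mul_apply]
  split_ifs with hv <;> simp [rowOnesBefore, hv, ← filter_gt_eq_Iio, sum_filter]

theorem isEquivalent_paddedCompleteAdj (ℓ : Fin n) :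
    IsEquivalent (paddedCompleteAdj ℓ)
      (diagonal fun i => if i < ℓ then 1 else if i = ℓ then ((ℓ : ℕ) : ℤ) else 0) := by
  set X := rowOnesBefore ℓ
  set B := paddedCompleteAdj ℓ
  have hX : X * X = 0 := rowOnesBefore_mul_self ℓ
  have h₁ : (1 + X) * B = of fun a v =>
      if a = ℓ then (if v ≤ ℓ then ((ℓ : ℕ) : ℤ) else 0) else B a v := by
    ext a v
    rw [one_add_rowOnesBefore_mul_apply]
    simp only [of_apply]
    split_ifs with ha hv
    · have hcount : ∑ u ∈ Iic ℓ, (if u ≠ v then (1 : ℤ) else 0) = (ℓ : ℕ) := by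
        rw [sum_boole, filter_ne', card_erase_of_mem (mem_Iic.2 hv), Fin.card_Iic,
          Nat.add_sub_cancel]
      rw [← hcount]
      refine sum_congr rfl fun u hu => ?_
      simp [B, paddedCompleteAdj, mem_Iic.1 hu, hv]
    · refine sum_eq_zero fun u _ => ?_
      simp [B, paddedCompleteAdj, hv]
    · rfl
  have h₂ : (1 + X) * B * (1 - X) = of fun a v =>
      if a = ℓ ∧ v = ℓ then ((ℓ : ℕ) : ℤ) else if a < ℓ ∧ v = a then -1
      else if a < ℓ ∧ v = ℓ then 1 else 0 := by
    ext a v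
    rw [mul_one_sub_rowOnesBefore_apply, h₁]
    simp only [of_apply, B, paddedCompleteAdj]
    split_ifs <;> first | rfl | omega
  have h₃ : (1 + X) * B * (1 - X) * (1 + Xᵀ) =
      diagonal fun i => if i < ℓ then -1 else if i = ℓ then ((ℓ : ℕ) : ℤ) else 0 := by
    ext a v
    have hsum : ∑ w ∈ Iio ℓ, (if a = ℓ ∧ w = ℓ then ((ℓ : ℕ) : ℤ) else if a < ℓ ∧ w = a then -1
        else if a < ℓ ∧ w = ℓ then 1 else 0) = if a < ℓ then -1 else 0 := by
      rw [sum_congr rfl fun w hw => (?_ : _ = if a = w then (if a < ℓ then (-1 : ℤ) else 0) else 0),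
        sum_ite_eq]
      · split_ifs <;> simp_all
      · have := mem_Iio.1 hw
        split_ifs <;> first | rfl | omega
    rw [mul_one_add_rowOnesBefore_transpose_apply, h₂]
    simp only [of_apply, diagonal_apply, hsum, and_true]
    split_ifs <;> first | rfl | omega
  refine ⟨diagonal (fun i => if i < ℓ then -1 else 1) * (1 + X), (1 - X) * (1 + Xᵀ), ?_, ?_, ?_⟩
  · rw [det_mul, det_diagonal]
    refine (IsUnit.prod_univ_iff.2 fun i => ?_).mul (isUnit_det_one_add_of_mul_self_eq_zero hX)
    split_ifs <;> simp
  · rw [det_mul]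
    refine (isUnit_det_one_sub_of_mul_self_eq_zero hX).mul
      (isUnit_det_one_add_of_mul_self_eq_zero ?_)
    rw [← transpose_mul, hX, transpose_zero]
  · simp only [Matrix.mul_assoc] at h₃ ⊢
    rw [h₃, diagonal_mul_diagonal]
    congr 1
    ext i
    split_ifs <;> simp

end SmithForm

section CompleteMultipartite

variable {n k : ℕ}

theorem exists_perm_castLE_rightInverse {p : Fin n → Fin k} (hp : Function.Surjective p) :
    ∃ (hkn : k ≤ n) (σ : Equiv.Perm (Fin n)), ∀ i, p (σ (Fin.castLE hkn i)) = i := by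
  have hkn : k ≤ n := by simpa using Fintype.card_le_of_surjective p hp
  obtain ⟨σ, hσ⟩ := Equiv.Perm.exists_extending_pair (Fin.castLE hkn) (Function.surjInv hp)
    (Fin.castLE_injective hkn) (Function.injective_surjInv hp)
  exact ⟨hkn, σ, fun i => by rw [hσ, Function.surjInv_eq hp]⟩

theorem castLE_apply_eq_self_iff {hkn : k ≤ n} {q : Fin n → Fin k}
    (hq : ∀ i, q (Fin.castLE hkn i) = i) (u : Fin n) :
    Fin.castLE hkn (q u) = u ↔ (u : ℕ) < k := by
  refine ⟨fun h => h ▸ (q u).isLt, fun h => ?_⟩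
  calc Fin.castLE hkn (q u) = Fin.castLE hkn (q (Fin.castLE hkn ⟨u, h⟩)) := rfl
    _ = u := by rw [hq]; rfl

theorem restrict_representatives_eq_paddedCompleteAdj (hk : 1 ≤ k) (hkn : k ≤ n)
    {q : Fin n → Fin k} (hq : ∀ i, q (Fin.castLE hkn i) = i) :
    (of fun u v => if Fin.castLE hkn (q u) = u ∧ Fin.castLE hkn (q v) = v then
      (if q u = q v then (0 : ℤ) else 1) else 0) = paddedCompleteAdj ⟨k - 1, by omega⟩ := by
  ext u v
  have hu := castLE_apply_eq_self_iff hq u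
  have hv := castLE_apply_eq_self_iff hq v
  have huv (h₁ : Fin.castLE hkn (q u) = u) (h₂ : Fin.castLE hkn (q v) = v) : q u = q v ↔ u = v :=
    ⟨fun h => h₁ ▸ h₂ ▸ congrArg _ h, congrArg q⟩
  simp only [of_apply, paddedCompleteAdj, Fin.le_def]
  split_ifs <;> simp_all <;> omega

end CompleteMultipartite

theorem snf_complete_multipartite (n k : ℕ) (hk : 1 ≤ k)
    (p : Fin n → Fin k) (hp : Function.Surjective p) :
    ∃ P Q : Matrix (Fin n) (Fin n) ℤ, IsUnit P.det ∧ IsUnit Q.det ∧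
      P * (Matrix.of fun u v => if p u = p v then (0 : ℤ) else 1) * Q =
        Matrix.diagonal (fun i : Fin n =>
          if (i : ℕ) < k - 1 then 1 else if (i : ℕ) = k - 1 then (k : ℤ) - 1 else 0) := by
  obtain ⟨hkn, σ, hσ⟩ := exists_perm_castLE_rightInverse hp
  have hD : (diagonal fun i : Fin n => if i < ⟨k - 1, by omega⟩ then 1
      else if i = ⟨k - 1, by omega⟩ then ((k - 1 : ℕ) : ℤ) else 0) =
      diagonal fun i : Fin n =>
        if (i : ℕ) < k - 1 then 1 else if (i : ℕ) = k - 1 then (k : ℤ) - 1 else 0 := by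
    congr 1
    ext i
    simp only [Fin.lt_def, Fin.ext_iff, Nat.cast_sub hk, Nat.cast_one]
  have hA := (isEquivalent_submatrix (of fun u v => if p u = p v then (0 : ℤ) else 1) σ σ).trans
    (isEquivalent_restrict_representatives (p := p ∘ σ) (fun i j => if i = j then 0 else 1) hσ)
  rw [restrict_representatives_eq_paddedCompleteAdj hk hkn hσ] at hA
  exact hD ▸ hA.trans (isEquivalent_paddedCompleteAdj _)
end

section
/- Let G be a connected simple graph. Then G is {P_4, paw, K_4}-free if and only if G is an induced subgraph of a complete tripartite graph. -/
namespace SimpleGraph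

variable {V : Type*} {G : SimpleGraph V}

lemma nonempty_pathGraph_four_embedding {a b c d : V} (hab : G.Adj a b) (hbc : G.Adj b c)
    (hcd : G.Adj c d) (hac : ¬ G.Adj a c) (had : ¬ G.Adj a d) (hbd : ¬ G.Adj b d) :
    Nonempty (pathGraph 4 ↪g G) := by
  have := hab.ne; have := hbc.ne; have := hcd.ne
  have : a ≠ c := by rintro rfl; exact had hcd
  have : a ≠ d := by rintro rfl; exact hac hcd.symm
  have : b ≠ d := by rintro rfl; exact had hab
  refine ⟨⟨⟨![a, b, c, d], fun i j h => ?_⟩, fun {i j} => ?_⟩⟩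
  · fin_cases i <;> fin_cases j <;> simp_all
  · change G.Adj (![a, b, c, d] i) (![a, b, c, d] j) ↔ _
    fin_cases i <;> fin_cases j <;> simp_all [pathGraph_adj, adj_comm]

lemma nonempty_paw_embedding {a b c d : V} (hab : G.Adj a b) (hbc : G.Adj b c)
    (hbd : G.Adj b d) (hcd : G.Adj c d) (hac : ¬ G.Adj a c) (had : ¬ G.Adj a d) :
    Nonempty (pawGraph ↪g G) := by
  have := hab.ne; have := hbc.ne; have := hbd.ne; have := hcd.ne
  have : a ≠ c := by rintro rfl; exact had hcd
  have : a ≠ d := by rintro rfl; exact hac hcd.symm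
  refine ⟨⟨⟨![a, b, c, d], fun i j h => ?_⟩, fun {i j} => ?_⟩⟩
  · fin_cases i <;> fin_cases j <;> simp_all
  · change G.Adj (![a, b, c, d] i) (![a, b, c, d] j) ↔ _
    fin_cases i <;> fin_cases j <;> simp_all [pawGraph, adj_comm]

lemma cliqueFree_iff_not_nonempty_topEmbedding {n : ℕ} :
    G.CliqueFree n ↔ ¬ Nonempty ((⊤ : SimpleGraph (Fin n)) ↪g G) :=
  ⟨fun h ⟨f⟩ => f.isContained.not_cliqueFree h,
    fun h => by_contra fun hn => h ⟨topEmbeddingOfNotCliqueFree hn⟩⟩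

lemma not_isPathGraph3Compl_of_walk (hP4 : ¬ Nonempty (pathGraph 4 ↪g G))
    (hpaw : ¬ Nonempty (pawGraph ↪g G)) {v w₁ w₂ : V} (p : G.Walk v w₁) :
    ¬ G.IsPathGraph3Compl v w₁ w₂ := by
  induction p generalizing w₂ with
  | nil => exact fun h => h.ne_fst rfl
  | @cons v u w₁ hvu p ih =>
    rintro ⟨hw₁w₂, hvw₁, hvw₂⟩
    by_cases huw₁ : G.Adj u w₁ <;> by_cases huw₂ : G.Adj u w₂
    · exact hpaw (nonempty_paw_embedding hvu huw₁ huw₂ hw₁w₂ hvw₁ hvw₂)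
    · exact hP4 (nonempty_pathGraph_four_embedding hvu huw₁ hw₁w₂ hvw₁ hvw₂ huw₂)
    · exact hP4 (nonempty_pathGraph_four_embedding hvu huw₂ hw₁w₂.symm hvw₂ hvw₁ huw₁)
    · exact ih ⟨hw₁w₂, huw₁, huw₂⟩

theorem isCompleteMultipartite_of_preconnected (hG : G.Preconnected)
    (hP4 : ¬ Nonempty (pathGraph 4 ↪g G)) (hpaw : ¬ Nonempty (pawGraph ↪g G)) :
    G.IsCompleteMultipartite := by
  by_contra h
  obtain ⟨v, w₁, w₂, h3⟩ := exists_isPathGraph3Compl_of_not_isCompleteMultipartite h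
  exact not_isPathGraph3Compl_of_walk hP4 hpaw (hG v w₁).some h3

lemma not_isCompleteMultipartite_pathGraph_four : ¬ (pathGraph 4).IsCompleteMultipartite :=
  not_isCompleteMultipartite_iff_exists_isPathGraph3Compl.2
    ⟨0, 2, 3, by simp [pathGraph_adj], by simp [pathGraph_adj], by simp [pathGraph_adj]⟩

lemma not_isCompleteMultipartite_paw : ¬ pawGraph.IsCompleteMultipartite :=
  not_isCompleteMultipartite_iff_exists_isPathGraph3Compl.2
    ⟨0, 2, 3, by simp [pawGraph], by simp [pawGraph], by simp [pawGraph]⟩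

def completeMultipartiteGraph.sigmaMapEmbedding {ι κ : Type*} {X : ι → Type*}
    {Y : κ → Type*} (f : ι ↪ κ) (g : ∀ i, X i ↪ Y (f i)) :
    completeMultipartiteGraph X ↪g completeMultipartiteGraph Y where
  toEmbedding := f.sigmaMap g
  map_rel_iff' := by simp [Sigma.map, f.injective.eq_iff]

theorem IsCompleteMultipartite.nonempty_embedding_of_cliqueFree [Fintype V] {n : ℕ}
    (h : G.IsCompleteMultipartite) (hc : G.CliqueFree (n + 1)) :
    Nonempty (G ↪g completeMultipartiteGraph fun _ : Fin n => Fin (Fintype.card V)) := by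
  classical
  have hparts : Fintype.card (Quotient h.setoid) ≤ n := by
    by_contra! hn
    exact completeMultipartiteGraph.not_cliqueFree_of_le_card _
      (fun c => ⟨c.out, h.setoid.refl _⟩) hn (hc.comap h.iso.symm.isContained)
  obtain ⟨f⟩ := Function.Embedding.nonempty_of_card_le (hparts.trans (Fintype.card_fin n).ge)
  exact ⟨h.iso.toEmbedding.trans <| completeMultipartiteGraph.sigmaMapEmbedding f
    fun _ => (Function.Embedding.subtype _).trans (Fintype.equivFin V).toEmbedding⟩

end SimpleGraph

theorem P4_paw_K4_free_iff_induced_complete_tripartite {V : Type*} [Fintype V]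
    (G : SimpleGraph V) (hconn : G.Connected) :
    (¬ Nonempty (SimpleGraph.pathGraph 4 ↪g G) ∧
     ¬ Nonempty (pawGraph ↪g G) ∧
     ¬ Nonempty ((⊤ : SimpleGraph (Fin 4)) ↪g G)) ↔
    ∃ m : Fin 3 → ℕ, (∀ i, 0 < m i) ∧
      Nonempty (G ↪g SimpleGraph.completeMultipartiteGraph (fun i : Fin 3 => Fin (m i))) := by
  constructor
  · rintro ⟨hP4, hpaw, hK4⟩
    have : Nonempty V := hconn.nonempty
    have hG := G.isCompleteMultipartite_of_preconnected hconn.preconnected hP4 hpaw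
    exact ⟨fun _ => Fintype.card V, fun _ => Fintype.card_pos,
      hG.nonempty_embedding_of_cliqueFree
        (SimpleGraph.cliqueFree_iff_not_nonempty_topEmbedding.2 hK4)⟩
  · rintro ⟨m, -, ⟨e⟩⟩
    have hG : G.IsCompleteMultipartite :=
      (SimpleGraph.completeMultipartiteGraph.isCompleteMultipartite _).comap e
    have hK4 : G.CliqueFree 4 :=
      (SimpleGraph.cliqueFree_completeMultipartiteGraph _ (by simp)).comap e.isContained
    exact ⟨fun ⟨f⟩ => SimpleGraph.not_isCompleteMultipartite_pathGraph_four (hG.comap f),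
      fun ⟨f⟩ => SimpleGraph.not_isCompleteMultipartite_paw (hG.comap f),
      SimpleGraph.cliqueFree_iff_not_nonempty_topEmbedding.1 hK4⟩
end
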